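/- arXiv:2603.14681 — 2 statements merged into one kernel-verified Lean document; each statement's English description precedes it below -/
import Mathlib

section
/- With L_{k,j} defined by the forward segmentation recursion and R_{k,i} defined by the backward recursion R_{0,n}=1, R_{0,i}=0 for i<n, R_{k+1,i} = Σ_{h=i+1}^{n-k} A_{i,h}·R_{k,h}, the following split identity holds for any k ≥ 1, any p with 1 ≤ p ≤ k−1, and any h with p ≤ h ≤ n−(k−p): the total weight of all k-segmentations of [1..n] whose p-th boundary equals h is exactly L_{p,h}·R_{k−p,h}. Consequently L_{k,n} = Σ_h L_{p,h}·R_{k−p,h}. -/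
open Finset
open scoped Classical

/-! A segmentation `0 = t₀ < ⋯ < t_m = b` is a strictly increasing path, and the recursions for
`L` and `R` are the last-step and first-step decompositions of path sums: `L m j` is the total
weight of `m`-step paths from `0` to `j`, and `R m i` that of `m`-step paths from `i` to `n`.
Cutting a path at its `p`-th vertex `h` is a bijection onto pairs (path `0 → h`, path `h → n`)
under which weights multiply, which gives the first identity; summing over `h` gives the second. -/

namespace Segmentation

section Path

variable {m n : ℕ}

def weight (A : ℕ → ℕ → ℝ) (t : Fin (m + 1) → Fin (n + 1)) : ℝ :=
  ∏ q : Fin m, A (t q.castSucc) (t q.succ)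

def IsPath (a b : ℕ) (t : Fin (m + 1) → Fin (n + 1)) : Prop :=
  StrictMono t ∧ (t 0 : ℕ) = a ∧ (t (Fin.last m) : ℕ) = b

theorem weight_cons (A : ℕ → ℕ → ℝ) (x : Fin (n + 1)) (t : Fin (m + 1) → Fin (n + 1)) :
    weight A (Fin.cons x t : Fin (m + 2) → Fin (n + 1)) = A x (t 0) * weight A t :=
  Fin.prod_univ_succ _

theorem isPath_cons {a b : ℕ} {x : Fin (n + 1)} {t : Fin (m + 1) → Fin (n + 1)} :
    IsPath a b (Fin.cons x t : Fin (m + 2) → Fin (n + 1)) ↔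
      (x : ℕ) = a ∧ x < t 0 ∧ IsPath (t 0) b t := by
  simp only [IsPath, ← Fin.succ_last, Fin.cons_zero, Fin.cons_succ]
  rw [show StrictMono (Fin.cons x t : Fin (m + 2) → Fin (n + 1)) ↔ x < t 0 ∧ StrictMono t from
    strictMono_vecCons]
  tauto

theorem IsPath.add_le {a b : ℕ} {t : Fin (m + 1) → Fin (n + 1)} (ht : IsPath a b t) :
    a + m ≤ b := by
  obtain ⟨hmono, rfl, rfl⟩ := ht
  suffices ∀ i : Fin (m + 1), (t 0 : ℕ) + i ≤ t i by simpa using this (Fin.last m)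
  intro i
  induction i using Fin.induction with
  | zero => simp
  | succ j ih =>
    have := hmono (Fin.castSucc_lt_succ (i := j))
    simp only [Fin.val_succ, Fin.val_castSucc, Fin.lt_def] at *
    omega

end Path

noncomputable section

variable (A : ℕ → ℕ → ℝ) (n : ℕ)

def pathSum (m a b : ℕ) : ℝ :=
  ∑ t : Fin (m + 1) → Fin (n + 1) with IsPath a b t, weight A t

def pathSumThrough {m : ℕ} (a b : ℕ) (i : Fin (m + 1)) (c : ℕ) : ℝ :=
  ∑ t : Fin (m + 1) → Fin (n + 1) with IsPath a b t ∧ (t i : ℕ) = c, weight A t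

theorem pathSum_eq_zero_of_lt {m a b : ℕ} (h : b < a + m) : pathSum A n m a b = 0 :=
  sum_eq_zero fun _ ht => absurd (mem_filter.1 ht).2.add_le (not_le.2 h)

theorem pathSum_zero {a : ℕ} (ha : a ≤ n) (b : ℕ) :
    pathSum A n 0 a b = if a = b then 1 else 0 := by
  have hpath (t : Fin 1 → Fin (n + 1)) : IsPath a b t ↔ (t 0 : ℕ) = a ∧ a = b := by
    simp only [IsPath, Fin.last_zero, Subsingleton.strictMono t, true_and]
    constructor <;> rintro ⟨h, h'⟩ <;> omega
  unfold pathSum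
  split_ifs with hab
  · rw [sum_eq_single_of_mem (fun _ => ⟨a, Nat.lt_succ_of_le ha⟩)]
    · simp [weight]
    · exact mem_filter.2 ⟨mem_univ _, (hpath _).2 ⟨rfl, hab⟩⟩
    · intro t ht hne
      refine absurd (funext fun i => Fin.ext ?_) hne
      rw [Fin.fin_one_eq_zero i]
      exact ((hpath t).1 (mem_filter.1 ht).2).1
  · exact sum_eq_zero fun t ht => absurd ((hpath t).1 (mem_filter.1 ht).2).2 hab

theorem pathSumThrough_last (m a b : ℕ) :
    pathSumThrough A n a b (Fin.last m) b = pathSum A n m a b :=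
  sum_congr (filter_congr fun _ _ => and_iff_left_of_imp fun ht => ht.2.2) fun _ _ => rfl

theorem sum_pathSumThrough {m : ℕ} (a b : ℕ) (i : Fin (m + 1)) :
    ∑ c ∈ range (n + 1), pathSumThrough A n a b i c = pathSum A n m a b := by
  unfold pathSumThrough
  simp_rw [← filter_filter]
  exact sum_fiberwise_of_maps_to (fun t _ => mem_range.2 (t i).isLt) _

theorem pathSumThrough_succ {m a : ℕ} (ha : a ≤ n) (b : ℕ) (i : Fin (m + 1)) (c : ℕ) :
    pathSumThrough A n a b i.succ c =
      ∑ x ∈ Icc (a + 1) n, A a x * pathSumThrough A n x b i c := by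
  obtain ⟨a, rfl⟩ : ∃ a' : Fin (n + 1), (a' : ℕ) = a :=
    ⟨⟨a, Nat.lt_succ_of_le ha⟩, rfl⟩
  let S : Finset (Fin (m + 1) → Fin (n + 1)) :=
    {t | a < t 0 ∧ IsPath (t 0) b t ∧ (t i : ℕ) = c}
  have tails : pathSumThrough A n a b i.succ c = ∑ t ∈ S, A a (t 0) * weight A t := by
    symm
    refine sum_nbij' (fun t => Fin.cons a t) Fin.tail
      ?_ ?_ (fun _ _ => Fin.tail_cons _ _) ?_ (fun t _ => (weight_cons A _ t).symm)
    · intro t ht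
      simp only [S, mem_filter, mem_univ, true_and, isPath_cons, Fin.cons_succ] at ht ⊢
      exact and_assoc.2 ht
    · intro t ht
      rw [← Fin.cons_self_tail t] at ht
      simp only [S, mem_filter, mem_univ, true_and, isPath_cons, Fin.cons_succ] at ht ⊢
      obtain ⟨⟨h0, hlt, hpath⟩, hc⟩ := ht
      exact ⟨Fin.ext h0 ▸ hlt, hpath, hc⟩
    · intro t ht
      rw [← Fin.cons_self_tail t] at ht
      simp only [mem_filter, mem_univ, true_and, isPath_cons] at ht
      rw [← Fin.ext ht.1.1, Fin.cons_self_tail]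
  have fibres : ∑ t ∈ S, A a (t 0) * weight A t =
      ∑ x ∈ Icc ((a : ℕ) + 1) n, A a x * pathSumThrough A n x b i c := by
    rw [← sum_fiberwise_of_maps_to (g := fun t => (t 0 : ℕ)) (t := Icc ((a : ℕ) + 1) n)]
    · refine sum_congr rfl fun x hx => ?_
      rw [pathSumThrough, mul_sum, filter_filter]
      refine sum_congr (filter_congr fun t _ => ?_) fun t ht => by rw [(mem_filter.1 ht).2.1.2.1]
      constructor
      · rintro ⟨⟨-, hpath, hc⟩, rfl⟩
        exact ⟨hpath, hc⟩
      · rintro ⟨hpath, hc⟩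
        have h0 : (t 0 : ℕ) = x := hpath.2.1
        rw [mem_Icc] at hx
        exact ⟨⟨Fin.lt_def.2 (by omega), h0 ▸ hpath, hc⟩, h0⟩
    · intro t ht
      simp only [S, mem_filter, mem_Icc] at ht ⊢
      omega
  rw [tails, fibres]

theorem pathSum_succ {m a : ℕ} (ha : a ≤ n) (b : ℕ) :
    pathSum A n (m + 1) a b = ∑ x ∈ Icc (a + 1) n, A a x * pathSum A n m x b := by
  simp_rw [← pathSumThrough_last, ← Fin.succ_last, pathSumThrough_succ A n ha]

theorem pathSumThrough_eq_mul (m p : ℕ) {a : ℕ} (ha : a ≤ n) (b c : ℕ) :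
    pathSumThrough A n a b (⟨p, by omega⟩ : Fin (m + p + 1)) c =
      pathSum A n p a c * pathSum A n m c b := by
  induction p generalizing a with
  | zero =>
    rw [pathSum_zero A n ha]
    unfold pathSumThrough
    split_ifs with hac
    · subst hac
      rw [one_mul, pathSum]
      exact sum_congr (filter_congr fun t _ => and_iff_left_of_imp fun ht => ht.2.1) fun _ _ => rfl
    · rw [zero_mul]
      refine sum_eq_zero fun t ht => absurd ?_ hac
      obtain ⟨⟨-, h0, -⟩, hc⟩ := (mem_filter.1 ht).2
      exact h0.symm.trans hc
  | succ p ih =>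
    change pathSumThrough A n a b (Fin.succ ⟨p, by omega⟩ : Fin (m + p + 1 + 1)) c = _
    rw [pathSumThrough_succ A n ha, pathSum_succ A n ha, sum_mul]
    refine sum_congr rfl fun x hx => ?_
    rw [ih (mem_Icc.1 hx).2, mul_assoc]

theorem pathSum_add (m p : ℕ) {a : ℕ} (ha : a ≤ n) (b : ℕ) :
    pathSum A n (m + p) a b = ∑ c ∈ range (n + 1), pathSum A n p a c * pathSum A n m c b := by
  rw [← sum_pathSumThrough A n a b (⟨p, by omega⟩ : Fin (m + p + 1))]
  exact sum_congr rfl fun c _ => pathSumThrough_eq_mul A n m p ha b c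

theorem pathSum_add_eq_sum_Icc (m p : ℕ) {a b : ℕ} (ha : a ≤ n) (hb : b ≤ n) :
    pathSum A n (m + p) a b =
      ∑ c ∈ Icc (a + p) (b - m), pathSum A n p a c * pathSum A n m c b := by
  rw [pathSum_add A n m p ha]
  refine (sum_subset (fun c hc => ?_) fun c _ hc => ?_).symm
  · simp only [mem_range, mem_Icc] at hc ⊢
    omega
  · rw [mem_Icc, not_and_or, not_le, not_le] at hc
    rcases hc with hc | hc
    · rw [pathSum_eq_zero_of_lt A n hc, zero_mul]
    · rw [pathSum_eq_zero_of_lt A n (m := m) (by omega), mul_zero]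

theorem pathSum_one_of_lt {a b : ℕ} (hab : a < b) (hb : b ≤ n) : pathSum A n 1 a b = A a b := by
  rw [pathSum_succ A n (by omega),
    sum_congr rfl fun x hx => by rw [pathSum_zero A n (mem_Icc.1 hx).2]]
  simp [mem_Icc, hab, hb]

theorem pathSum_succ_left (m : ℕ) {a b : ℕ} (ha : a ≤ n) (hb : b ≤ n) :
    pathSum A n (m + 1) a b = ∑ x ∈ Icc (a + 1) (b - m), A a x * pathSum A n m x b := by
  rw [pathSum_add_eq_sum_Icc A n m 1 ha hb]
  refine sum_congr rfl fun x hx => ?_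
  rw [mem_Icc] at hx
  rw [pathSum_one_of_lt A n (by omega) (by omega)]

theorem pathSum_succ_right (m : ℕ) {a b : ℕ} (ha : a ≤ n) (hb : b ≤ n) (hb0 : 0 < b) :
    pathSum A n (m + 1) a b = ∑ x ∈ Icc (a + m) (b - 1), pathSum A n m a x * A x b := by
  rw [add_comm, pathSum_add_eq_sum_Icc A n 1 m ha hb]
  refine sum_congr rfl fun x hx => ?_
  rw [mem_Icc] at hx
  rw [pathSum_one_of_lt A n (by omega) hb]

theorem forward_eq_pathSum {L : ℕ → ℕ → ℝ} (hL00 : L 0 0 = 1)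
    (hL0 : ∀ j, 0 < j → L 0 j = 0)
    (hLrec : ∀ m j, 1 ≤ j → L (m + 1) j = ∑ x ∈ Icc m (j - 1), L m x * A x j)
    ⦃m j : ℕ⦄ (hmj : m ≤ j) (hj : j ≤ n) : L m j = pathSum A n m 0 j := by
  induction m generalizing j with
  | zero =>
    rw [pathSum_zero A n (Nat.zero_le n)]
    rcases Nat.eq_zero_or_pos j with rfl | hj0
    · simpa using hL00
    · rw [hL0 j hj0, if_neg hj0.ne]
  | succ m ih =>
    rw [hLrec m j (by omega), pathSum_succ_right A n m (Nat.zero_le n) hj (by omega), zero_add]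
    refine sum_congr rfl fun x hx => ?_
    rw [mem_Icc] at hx
    rw [ih hx.1 (by omega)]

theorem backward_eq_pathSum {R : ℕ → ℕ → ℝ} (hR0n : R 0 n = 1)
    (hR0 : ∀ i, i < n → R 0 i = 0)
    (hRrec : ∀ m i, i < n → R (m + 1) i = ∑ x ∈ Icc (i + 1) (n - m), A i x * R m x)
    ⦃m i : ℕ⦄ (him : i + m ≤ n) : R m i = pathSum A n m i n := by
  induction m generalizing i with
  | zero =>
    rw [pathSum_zero A n (by omega)]
    rcases (Nat.le_of_add_right_le him).lt_or_eq with hin | rfl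
    · rw [hR0 i hin, if_neg hin.ne]
    · simpa using hR0n
  | succ m ih =>
    rw [hRrec m i (by omega), pathSum_succ_left A n m (by omega) le_rfl]
    refine sum_congr rfl fun x hx => ?_
    rw [mem_Icc] at hx
    rw [ih (by omega)]

end

end Segmentation

open Segmentation in
/-- split identity.  The total weight of all `k`-segmentations
of `[1..n]` whose `p`-th boundary equals `h` is `L_{p,h} · R_{k−p,h}`, and
consequently `L_{k,n} = Σ_h L_{p,h} · R_{k−p,h}`. -/
theorem dp_split_identity (n k p h : ℕ)
    (hp2 : p ≤ k - 1)
    (hh1 : p ≤ h) (hh2 : h ≤ n - (k - p)) (hn : k ≤ n)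
    (A : ℕ → ℕ → ℝ)
    (L R : ℕ → ℕ → ℝ)
    (hL00 : L 0 0 = 1) (hL0 : ∀ j, 0 < j → L 0 j = 0)
    (hLrec : ∀ k' j, 1 ≤ j →
      L (k' + 1) j = ∑ h' ∈ Finset.Icc k' (j - 1), L k' h' * A h' j)
    (hR0n : R 0 n = 1) (hR0 : ∀ i, i < n → R 0 i = 0)
    (hRrec : ∀ k' i, i < n →
      R (k' + 1) i = ∑ h' ∈ Finset.Icc (i + 1) (n - k'), A i h' * R k' h') :
    (∑ t ∈ Finset.univ.filter (fun t : Fin (k + 1) → Fin (n + 1) =>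
        StrictMono t ∧ t 0 = 0 ∧ t (Fin.last k) = Fin.last n ∧
        (t ⟨p, by omega⟩ : Fin (n + 1)).val = h),
      ∏ q : Fin k, A (t q.castSucc).val (t q.succ).val)
      = L p h * R (k - p) h
    ∧ L k n = ∑ h' ∈ Finset.Icc p (n - (k - p)), L p h' * R (k - p) h' := by
  have hL := forward_eq_pathSum A n hL00 hL0 hLrec
  have hR := backward_eq_pathSum A n hR0n hR0 hRrec
  obtain ⟨m, rfl⟩ : ∃ m, k = m + p := ⟨k - p, by omega⟩
  rw [Nat.add_sub_cancel] at hh2 ⊢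
  constructor
  · calc _ = pathSumThrough A n 0 n (⟨p, by omega⟩ : Fin (m + p + 1)) h :=
          sum_congr (filter_congr fun t _ => by
            simp only [IsPath, Fin.ext_iff, Fin.val_zero, Fin.val_last, and_assoc]) fun _ _ => rfl
      _ = L p h * R m h := by
          rw [pathSumThrough_eq_mul A n m p (Nat.zero_le n), hL hh1 (by omega), hR (by omega)]
  · rw [hL (by omega) le_rfl, pathSum_add_eq_sum_Icc A n m p (Nat.zero_le n) le_rfl, zero_add]
    refine sum_congr rfl fun c hc => ?_
    rw [mem_Icc] at hc
    rw [hL hc.1 (by omega), hR (by omega)]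
end

section
/- (Jaakkola–Jordan quadratic bound for the logistic log-sigmoid.) For every θ ∈ ℝ and every ξ > 0, log σ(θ) ≥ θ/2 − λ(ξ)(θ² − ξ²) + log σ(ξ) − ξ/2, where σ(x) = 1/(1+e^{−x}) and λ(ξ) = tanh(ξ/2)/(4ξ), with equality when |θ| = ξ. -/
/-!
Writing `σ(x) = e^{x/2} / (2 cosh (x/2))` gives `log σ(x) = x/2 - log 2 - log cosh (x/2)`, so the
bound is the tangent-line inequality at `u = ξ²/4` for the concave function `u ↦ log cosh √u`,
in the form `log cosh a ≤ log cosh b + tanh b / (2b) · (a² - b²)`. Concavity comes down to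
`tanh x / x` being decreasing on `(0, ∞)`, i.e. to `x ≤ sinh x cosh x`: the difference of the two
sides of the tangent inequality has derivative `x (tanh b / b - tanh x / x)` in `x = |a|`, which
changes sign from `-` to `+` at `b`. Both sides are even in `θ`, and equal at `|θ| = ξ`.
-/

open Real

/-- Logistic sigmoid. -/
noncomputable def sigm (x : ℝ) : ℝ := 1 / (1 + Real.exp (-x))

/-- Jaakkola–Jordan variational coefficient `λ(ξ) = tanh(ξ/2)/(4ξ)`. -/
noncomputable def jjLambda (ξ : ℝ) : ℝ := Real.tanh (ξ / 2) / (4 * ξ)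

namespace Real

theorem hasDerivAt_tanh (x : ℝ) : HasDerivAt tanh (1 / cosh x ^ 2) x := by
  have hquot := (hasDerivAt_sinh x).div (hasDerivAt_cosh x) (cosh_pos x).ne'
  rw [show tanh = fun y => sinh y / cosh y from funext tanh_eq_sinh_div_cosh]
  refine hquot.congr_deriv ?_
  rw [← cosh_sq_sub_sinh_sq x]
  ring

theorem mul_tanh_le_mul_tanh {s t : ℝ} (hs : 0 ≤ s) (hst : s ≤ t) :
    s * tanh t ≤ t * tanh s := by
  let φ : ℝ → ℝ := fun x => x * tanh s - s * tanh x
  have hφ : ∀ x, HasDerivAt φ (tanh s - s * (1 / cosh x ^ 2)) x := fun x =>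
    ((hasDerivAt_mul_const (tanh s)).sub ((hasDerivAt_tanh x).const_mul s)).congr_deriv (by ring)
  have hφ' : ∀ x, s ≤ x → 0 ≤ tanh s - s * (1 / cosh x ^ 2) := by
    intro x hx
    have hcosh : cosh s ≤ cosh x := by
      rw [cosh_le_cosh, abs_of_nonneg hs, abs_of_nonneg (hs.trans hx)]
      exact hx
    have hs_le : s ≤ sinh s * cosh s := by
      nlinarith [self_le_sinh_iff.2 hs, one_le_cosh s, sinh_nonneg_iff.2 hs]
    have htanh : s * (1 / cosh s ^ 2) ≤ tanh s := by
      rw [tanh_eq_sinh_div_cosh, mul_one_div, div_le_div_iff₀ (by positivity) (cosh_pos s)]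
      nlinarith [cosh_pos s]
    have hmono : s * (1 / cosh x ^ 2) ≤ s * (1 / cosh s ^ 2) := by gcongr
    linarith
  have hφ_mono : MonotoneOn φ (Set.Ici s) :=
    monotoneOn_of_hasDerivWithinAt_nonneg (convex_Ici s)
      (fun x _ => (hφ x).continuousAt.continuousWithinAt)
      (fun x _ => (hφ x).hasDerivWithinAt)
      (fun x hx => hφ' x (interior_subset hx))
  have := hφ_mono Set.self_mem_Ici hst hst
  simp only [φ] at this
  linarith

theorem log_cosh_le_tangent {b : ℝ} (hb : 0 < b) (a : ℝ) :
    log (cosh a) ≤ log (cosh b) + tanh b / (2 * b) * (a ^ 2 - b ^ 2) := by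
  let g : ℝ → ℝ := fun x => log (cosh b) + tanh b / (2 * b) * (x ^ 2 - b ^ 2) - log (cosh x)
  have hg : ∀ x, HasDerivAt g (x * tanh b / b - tanh x) x := fun x => by
    have hlog := (hasDerivAt_cosh x).log (cosh_pos x).ne'
    rw [← tanh_eq_sinh_div_cosh] at hlog
    have hquad := (((hasDerivAt_pow 2 x).sub_const (b ^ 2)).const_mul (tanh b / (2 * b))).const_add
      (log (cosh b))
    refine (hquad.sub hlog).congr_deriv ?_
    field_simp
    ring
  have hg_cont : Continuous g := continuous_iff_continuousAt.2 fun x => (hg x).continuousAt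
  have hgb : g b = 0 := by simp [g]
  suffices 0 ≤ g |a| by
    simpa [g, cosh_abs, sq_abs] using this
  rcases le_total b |a| with hba | hab
  · have hmono : MonotoneOn g (Set.Ici b) :=
      monotoneOn_of_hasDerivWithinAt_nonneg (convex_Ici b) hg_cont.continuousOn
        (fun x _ => (hg x).hasDerivWithinAt) fun x hx => by
          rw [interior_Ici] at hx
          rw [sub_nonneg, le_div_iff₀ hb]
          linarith [mul_tanh_le_mul_tanh hb.le (le_of_lt hx)]
    simpa [hgb] using hmono Set.self_mem_Ici hba hba
  · have hanti : AntitoneOn g (Set.Icc 0 b) :=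
      antitoneOn_of_hasDerivWithinAt_nonpos (convex_Icc 0 b) hg_cont.continuousOn
        (fun x _ => (hg x).hasDerivWithinAt) fun x hx => by
          rw [interior_Icc] at hx
          rw [sub_nonpos, div_le_iff₀ hb]
          linarith [mul_tanh_le_mul_tanh hx.1.le hx.2.le]
    simpa [hgb] using hanti ⟨abs_nonneg a, hab⟩ ⟨hb.le, le_rfl⟩ hab

end Real

theorem sigm_eq_exp_div_cosh (x : ℝ) : sigm x = exp (x / 2) / (2 * cosh (x / 2)) := by
  rw [sigm, cosh_eq, show -x = -(x / 2) - x / 2 by ring, exp_sub]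
  field_simp

theorem log_sigm (x : ℝ) : log (sigm x) = x / 2 - log 2 - log (cosh (x / 2)) := by
  rw [sigm_eq_exp_div_cosh, log_div (exp_pos _).ne' (by positivity), log_exp,
    log_mul two_ne_zero (cosh_pos _).ne']
  ring

/-- Jaakkola–Jordan quadratic bound:
`log σ(θ) ≥ θ/2 − λ(ξ)(θ² − ξ²) + log σ(ξ) − ξ/2`, with equality when `|θ| = ξ`. -/
theorem jaakkola_jordan_bound (θ ξ : ℝ) (hξ : 0 < ξ) :
    Real.log (sigm θ)
      ≥ θ / 2 - jjLambda ξ * (θ ^ 2 - ξ ^ 2) + Real.log (sigm ξ) - ξ / 2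
    ∧ (|θ| = ξ →
        Real.log (sigm θ)
          = θ / 2 - jjLambda ξ * (θ ^ 2 - ξ ^ 2) + Real.log (sigm ξ) - ξ / 2) := by
  rw [log_sigm θ, log_sigm ξ]
  constructor
  · have htangent := log_cosh_le_tangent (half_pos hξ) (θ / 2)
    have hcoeff : tanh (ξ / 2) / (2 * (ξ / 2)) * ((θ / 2) ^ 2 - (ξ / 2) ^ 2)
        = jjLambda ξ * (θ ^ 2 - ξ ^ 2) := by
      rw [jjLambda]
      field_simp
      ring
    linarith
  · intro habs
    have hcosh : cosh (θ / 2) = cosh (ξ / 2) := by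
      rw [← cosh_abs, abs_div, habs, abs_two]
    rw [hcosh, ← sq_abs θ, habs]
    ring
end
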